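/- For all n, k ≥ 1 and m ≥ 0, the word E_{1,n} · δ_m · E_{1,k} is a palindrome if and only if either n = k, or |n − k| = 1 and m has the same parity as min{n,k}. -/

import Mathlib

/-!
Each E_{1,m} is a palindrome and E_{1,m+1} = E_{1,m} δ_m E_{1,m}, so the reversal of
E_{1,n} x E_{1,k} is E_{1,k} x E_{1,n}, and the question is when these two words agree.
For k = n + 1 they agree exactly when x = δ_n. For k ≥ n + 2 their prefixes of length 2^{n+1}
are A_{n+1} = E_{1,n} δ_n E_{1,n} δ_{n+1} and E_{1,n} x A_n, which end in δ_{n+1} ≠ δ_n.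
-/

/-- The alphabet: letters a, b (for the period-doubling sequence) and c (used by Θ₂). -/
inductive Letter : Type
  | a | b | c
deriving DecidableEq, Repr

open Letter

/-- The period-doubling substitution σ : a ↦ ab, b ↦ aa, extended to words
(the extra letter c is left untouched; it is never produced). -/
def sigmaw : List Letter → List Letter :=
  fun w => w.flatMap fun x => match x with
    | .a => [.a, .b]
    | .b => [.a, .a]
    | .c => [.c]

/-- A_m = σ^m(a). -/
def A (m : ℕ) : List Letter := sigmaw^[m] [.a]

/-- B_m = σ^m(b). -/
def B (m : ℕ) : List Letter := sigmaw^[m] [.b]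

/-- δ_m, the last letter of A_m. -/
def delta (m : ℕ) : Letter := (A m).getLastD .a

/-- The period-doubling sequence D, as a function giving its (n+1)-st letter
(0-indexed); it is the fixed point of σ beginning with a, and A_{n+1} is a
prefix of it of length 2^{n+1} > n. -/
def D (n : ℕ) : Letter := (A (n + 1)).getD n .a

/-- The finite segment D[i .. i+len−1] of the period-doubling sequence,
with 1-based starting position i. -/
def Dseg (i len : ℕ) : List Letter := (List.range len).map fun k => D (i - 1 + k)

/-- u occurs in the finite word w at (1-based) position i. -/
def OccursAt {α : Type*} (u w : List α) (i : ℕ) : Prop :=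
  1 ≤ i ∧ i - 1 + u.length ≤ w.length ∧ (w.drop (i - 1)).take u.length = u

/-- u is a factor of the finite word w. -/
def IsFactor {α : Type*} (u w : List α) : Prop := ∃ i, OccursAt u w i

/-- u occurs in the period-doubling sequence D at (1-based) position i. -/
def DOccursAt (u : List Letter) (i : ℕ) : Prop := 1 ≤ i ∧ Dseg i u.length = u

/-- u is a factor of the period-doubling sequence D. -/
def FactorD (u : List Letter) : Prop := ∃ i, DOccursAt u i

/-- L(u,p): the starting position of the p-th occurrence (p ≥ 1) of u in D. -/
noncomputable def L (u : List Letter) (p : ℕ) : ℕ := Nat.nth (DOccursAt u) (p - 1)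

/-- r_p(u): the p-th return word of u (p ≥ 1), i.e. D[L(u,p) .. L(u,p+1)−1];
r_0(u) is the prefix of D preceding the first occurrence of u. -/
noncomputable def r (u : List Letter) (p : ℕ) : List Letter :=
  if p = 0 then Dseg 1 (L u 1 - 1) else Dseg (L u p) (L u (p + 1) - L u p)

/-- The morphism τ₁ : a ↦ a, b ↦ bb, extended to words. -/
def tau1 : List Letter → List Letter :=
  fun w => w.flatMap fun x => match x with
    | .a => [.a]
    | .b => [.b, .b]
    | .c => [.c]

/-- The morphism τ₂ : a ↦ ab, b ↦ acac, extended to words. -/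
def tau2 : List Letter → List Letter :=
  fun w => w.flatMap fun x => match x with
    | .a => [.a, .b]
    | .b => [.a, .c, .a, .c]
    | .c => [.c]

/-- Θ₁[p], the p-th letter (p ≥ 1) of Θ₁ = τ₁(D): since |τ₁(w)| ≥ |w|, the p-th
letter of Θ₁ is the p-th letter of the image of the length-p prefix of D. -/
def Theta1 (p : ℕ) : Letter := (tau1 (Dseg 1 p)).getD (p - 1) .a

/-- Θ₂[p], the p-th letter (p ≥ 1) of Θ₂ = τ₂(D). -/
def Theta2 (p : ℕ) : Letter := (tau2 (Dseg 1 p)).getD (p - 1) .a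

/-- The envelope word E_{1,m} = A_m with its last letter δ_m deleted. -/
def E1 (m : ℕ) : List Letter := (A m).dropLast

/-- The envelope word E_{2,m} = B_m B_{m−1} with its last letter δ_m deleted. -/
def E2 (m : ℕ) : List Letter := (B m ++ B (m - 1)).dropLast

/-- Enumeration of the envelope words in the order
E_{1,1} ⊏ E_{2,1} ⊏ E_{1,2} ⊏ E_{2,2} ⊏ …. -/
def Eword (k : ℕ) : List Letter := if k % 2 = 0 then E1 (k / 2 + 1) else E2 (k / 2 + 1)

/-- Env(u): the ⊏-least envelope word having u as a factor. -/
noncomputable def Env (u : List Letter) : List Letter :=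
  Eword (sInf {k | IsFactor u (Eword k)})

/-- The letterwise complement exchanging a and b. -/
def comp : Letter → Letter
  | .a => .b
  | .b => .a
  | .c => .c


lemma sigmaw_append (u v : List Letter) : sigmaw (u ++ v) = sigmaw u ++ sigmaw v :=
  List.flatMap_append

lemma sigmaw_iterate_append (m : ℕ) (u v : List Letter) :
    sigmaw^[m] (u ++ v) = sigmaw^[m] u ++ sigmaw^[m] v := by
  induction m generalizing u v with
  | zero => rfl
  | succ m ih => simp only [Function.iterate_succ_apply, sigmaw_append, ih]

lemma A_succ (m : ℕ) : A (m + 1) = A m ++ B m :=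
  sigmaw_iterate_append m [.a] [.b]

lemma B_succ (m : ℕ) : B (m + 1) = A m ++ A m :=
  sigmaw_iterate_append m [.a] [.a]

lemma A_ne_nil (m : ℕ) : A m ≠ [] := by
  induction m with
  | zero => simp [A]
  | succ m ih => simp [A_succ, ih]

lemma A_eq_E1_append_delta (m : ℕ) : A m = E1 m ++ [delta m] := by
  obtain ⟨w, x, hw⟩ := (List.eq_nil_or_concat (A m)).resolve_left (A_ne_nil m)
  simp [E1, delta, hw]

lemma delta_add_two (m : ℕ) : delta (m + 2) = delta m := by
  rw [delta, A_succ, B_succ, ← List.append_assoc, A_eq_E1_append_delta m, ← List.append_assoc,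
    List.getLastD_concat]

lemma delta_eq_ite (m : ℕ) : delta m = if m % 2 = 0 then .a else .b := by
  induction m using Nat.twoStepInduction with
  | zero => rfl
  | one => rfl
  | more m ih => rw [delta_add_two, ih, Nat.add_mod_right]

lemma delta_eq_delta_iff {p q : ℕ} : delta p = delta q ↔ p % 2 = q % 2 := by
  rw [delta_eq_ite, delta_eq_ite]
  rcases Nat.mod_two_eq_zero_or_one p with hp | hp <;>
    rcases Nat.mod_two_eq_zero_or_one q with hq | hq <;> simp [hp, hq]

lemma B_eq_E1_append_delta (m : ℕ) : B m = E1 m ++ [delta (m + 1)] := by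
  induction m with
  | zero => rfl
  | succ m ih =>
    have hE1 : E1 (m + 1) = A m ++ E1 m := by
      rw [E1, A_succ, List.dropLast_append_of_ne_nil (by simp [ih]), ih, List.dropLast_concat]
    rw [B_succ, hE1, delta_add_two, List.append_assoc, ← A_eq_E1_append_delta]

lemma E1_succ (m : ℕ) : E1 (m + 1) = E1 m ++ delta m :: E1 m := by
  rw [E1, A_succ, B_eq_E1_append_delta, ← List.append_assoc, List.dropLast_concat,
    A_eq_E1_append_delta]
  simp

lemma E1_reverse (m : ℕ) : (E1 m).reverse = E1 m := by
  induction m with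
  | zero => rfl
  | succ m ih => simp [E1_succ, ih]

lemma E1_prefix_E1_of_le {n k : ℕ} (h : n ≤ k) : E1 n <+: E1 k := by
  induction k, h using Nat.le_induction with
  | base => exact List.prefix_refl _
  | succ k _ ih => exact ih.trans (E1_succ k ▸ List.prefix_append _ _)

lemma A_prefix_E1_of_lt {n k : ℕ} (h : n < k) : A n <+: E1 k := by
  have hA : A n <+: E1 (n + 1) := by
    rw [E1_succ, A_eq_E1_append_delta]
    simp
  exact hA.trans (E1_prefix_E1_of_le h)

lemma E1_append_cons_comm_iff {n k : ℕ} (h : n < k) (x : Letter) :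
    E1 k ++ x :: E1 n = E1 n ++ x :: E1 k ↔ k = n + 1 ∧ x = delta n := by
  obtain rfl | hk := (Nat.succ_le_of_lt h).eq_or_lt
  · rw [E1_succ]
    simp [eq_comm]
  refine ⟨fun heq => ?_, fun hk1 => by omega⟩
  have hL : A (n + 1) <+: E1 n ++ x :: E1 k :=
    heq ▸ (A_prefix_E1_of_lt hk).trans (List.prefix_append _ _)
  have hR : E1 n ++ x :: A n <+: E1 n ++ x :: E1 k := by
    simpa using (A_prefix_E1_of_lt h)
  rw [A_succ, B_eq_E1_append_delta, A_eq_E1_append_delta] at hL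
  rw [A_eq_E1_append_delta] at hR
  have key := (List.prefix_of_prefix_length_le hL hR (by simp)).eq_of_length (by simp)
  simp only [List.append_assoc, List.cons_append, List.nil_append, List.append_cancel_left_eq,
    List.cons.injEq, and_true] at key
  exact absurd (delta_eq_delta_iff.mp key.2) (by omega)

theorem palindrome_E1_delta_E1_general (n k m : ℕ) :
    (E1 n ++ delta m :: E1 k).reverse = E1 n ++ delta m :: E1 k ↔
      n = k ∨ ((n = k + 1 ∨ k = n + 1) ∧ m % 2 = min n k % 2) := by
  have hrev : (E1 n ++ delta m :: E1 k).reverse = E1 k ++ delta m :: E1 n := by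
    simp [E1_reverse]
  rw [hrev]
  rcases lt_trichotomy n k with h | rfl | h
  · rw [E1_append_cons_comm_iff h, delta_eq_delta_iff, min_eq_left h.le]
    omega
  · simp
  · rw [eq_comm, E1_append_cons_comm_iff h, delta_eq_delta_iff, min_eq_right h.le]
    omega

/-- For all n, k ≥ 1 and m ≥ 0, the word E_{1,n} δ_m E_{1,k} is a
palindrome if and only if n = k, or |n − k| = 1 and m has the same parity as
min{n,k}. -/
theorem palindrome_E1_delta_E1 (n k m : ℕ) (hn : 1 ≤ n) (hk : 1 ≤ k) :
    (E1 n ++ delta m :: E1 k).reverse = E1 n ++ delta m :: E1 k ↔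
      n = k ∨ ((n = k + 1 ∨ k = n + 1) ∧ m % 2 = min n k % 2) :=
  palindrome_E1_delta_E1_general n k m
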